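/- arXiv:2411.19926 — 4 statements merged into one kernel-verified Lean document; each statement's English description precedes it below -/
import Mathlib

section
/- Let n ≥ 2 and let A ∈ ℂ^{n×n} satisfy ‖A‖ ≤ 1 (operator norm) and η(A) > 0. Then κ_V(A) ≤ n · 2^n · η(A)^{1−n}. -/
open MeasureTheory Matrix
open scoped ENNReal

noncomputable section

/-- ℓ²→ℓ² operator norm of a complex square matrix. -/
def opNorm {n : ℕ} (A : Matrix (Fin n) (Fin n) ℂ) : ℝ :=
  ‖(Matrix.toEuclideanCLM (𝕜 := ℂ) A : EuclideanSpace ℂ (Fin n) →L[ℂ] EuclideanSpace ℂ (Fin n))‖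

/-- `svAsc A i` : the `i`-th *smallest* singular value of `A` (0-indexed). -/
def svAsc {n : ℕ} (A : Matrix (Fin n) (Fin n) ℂ) (i : Fin n) : ℝ :=
  Real.sqrt ((Matrix.isHermitian_conjTranspose_mul_self A).eigenvalues
    (Tuple.sort ((Matrix.isHermitian_conjTranspose_mul_self A).eigenvalues) i))

/-- `sLow A m` = σ_{n-m}(A), the (m+1)-th smallest singular value. -/
def sLow {n : ℕ} (A : Matrix (Fin n) (Fin n) ℂ) (m : ℕ) : ℝ :=
  if h : m < n then svAsc A ⟨m, h⟩ else 0

/-- the ε-pseudospectrum of a matrix, as a subset of ℂ. -/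
def pspec {n : ℕ} (ε : ℝ) (A : Matrix (Fin n) (Fin n) ℂ) : Set ℂ :=
  {z | sLow (z • (1 : Matrix (Fin n) (Fin n) ℂ) - A) 0 ≤ ε}

open scoped Classical in
/-- minimum gap between eigenvalues (counted with multiplicity). -/
def minGap {n : ℕ} (A : Matrix (Fin n) (Fin n) ℂ) : ℝ :=
  sInf {d | ∃ a ∈ A.charpoly.roots, ∃ b ∈ A.charpoly.roots.erase a, d = ‖a - b‖}

/-- eigenvector condition number. -/
def kappaV {n : ℕ} (A : Matrix (Fin n) (Fin n) ℂ) : ℝ≥0∞ :=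
  ⨅ (V : Matrix (Fin n) (Fin n) ℂ) (D : Matrix (Fin n) (Fin n) ℂ)
    (_ : IsUnit V) (_ : D.IsDiag) (_ : A = V * D * V⁻¹),
    ENNReal.ofReal (opNorm V * opNorm V⁻¹)

/-- spectral radius of a matrix. -/
def spr {n : ℕ} (A : Matrix (Fin n) (Fin n) ℂ) : ℝ :=
  sSup {x : ℝ | ∃ μ ∈ spectrum ℂ A, x = ‖μ‖}

/-- ℓ∞→ℓ∞ operator norm (max absolute row sum). -/
def infNorm {n : ℕ} (A : Matrix (Fin n) (Fin n) ℂ) : ℝ :=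
  ⨆ i, ∑ j, ‖A i j‖

/-- ℓ² norm of a vector in ℂⁿ. -/
def l2norm {n : ℕ} (v : Fin n → ℂ) : ℝ :=
  Real.sqrt (∑ j, ‖v j‖ ^ 2)

/-- standard complex Gaussian measure on ℂ. -/
def gaussianC : Measure ℂ :=
  MeasureTheory.volume.withDensity fun z => ENNReal.ofReal (Real.pi⁻¹ * Real.exp (-(‖z‖ ^ 2)))

/-- law of δ ⬝ g : δ Bernoulli(ρ), g standard complex Gaussian, independent. -/
def sparseG (ρ : ℝ) : Measure ℂ :=
  ENNReal.ofReal ρ • gaussianC + ENNReal.ofReal (1 - ρ) • Measure.dirac 0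

/-- law of a vector with i.i.d. sparse-Gaussian entries. -/
def vecLaw (n : ℕ) (ρ : ℝ) : Measure (Fin n → ℂ) :=
  Measure.pi fun _ => sparseG ρ

instance matrixMeasurableSpace {n : ℕ} : MeasurableSpace (Matrix (Fin n) (Fin n) ℂ) :=
  inferInstanceAs (MeasurableSpace (Fin n → Fin n → ℂ))

/-- law of the random matrix N_g with i.i.d. sparse-Gaussian entries. -/
def matLaw (n : ℕ) (ρ : ℝ) : Measure (Matrix (Fin n) (Fin n) ℂ) :=
  Measure.pi fun _ : Fin n => vecLaw n ρ

/-- Lévy concentration p(v,r) of ⟨ĝ ⊙ δ̂, v⟩. -/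
def pconc (n : ℕ) (ρ : ℝ) (v : Fin n → ℂ) (r : ℝ) : ℝ≥0∞ :=
  ⨆ z : ℂ, vecLaw n ρ {x | ‖(∑ j, x j * (starRingEnd ℂ) (v j)) - z‖ ≤ r}

/-- incompressible unit vectors. -/
def Incomp (n : ℕ) (ρ : ℝ) (r s : ℝ) : Set (Fin n → ℂ) :=
  {v | l2norm v = 1 ∧ pconc n ρ v r ≤ ENNReal.ofReal s}

/-- compressible unit vectors. -/
def Comp (n : ℕ) (ρ : ℝ) (r s : ℝ) : Set (Fin n → ℂ) :=
  {v | l2norm v = 1 ∧ ENNReal.ofReal s ≤ pconc n ρ v r}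

/-- eigenvalue condition number κ(λ_j) read off from a diagonalizing matrix V:
    (norm of j-th column of V) times (norm of j-th row of V⁻¹). -/
def evCond {n : ℕ} (V : Matrix (Fin n) (Fin n) ℂ) (j : Fin n) : ℝ :=
  l2norm (fun i => V i j) * l2norm (fun i => V⁻¹ j i)

/-- the event that `B` has `n` distinct eigenvalues with all squared
    eigenvalue condition numbers at most τ. -/
def distinctCondEvent {n : ℕ} (τ : ℝ) (B : Matrix (Fin n) (Fin n) ℂ) : Prop :=
  ∃ (V : Matrix (Fin n) (Fin n) ℂ) (lam : Fin n → ℂ), Function.Injective lam ∧ IsUnit V ∧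
    B = V * Matrix.diagonal lam * V⁻¹ ∧ ∀ j, (evCond V j) ^ 2 ≤ τ

/-!
Diagonalize `A = V diag(λ) V⁻¹` with unit eigenvectors as the columns of `V`; then `‖V‖ ≤ √n` by
the Frobenius bound. The rank-one projector `v_j w_jᵀ` (column `j` of `V` times row `j` of `V⁻¹`)
is `L_j(A)` for the Lagrange basis polynomial `L_j(z) = ∏_{k ≠ j} (z - λ_k) / (λ_j - λ_k)`, so
`‖w_j‖ = ‖v_j w_jᵀ‖ ≤ ∏_{k ≠ j} ‖A - λ_k‖ / |λ_j - λ_k| ≤ (2‖A‖/η)^(n-1)`, using `|λ_k| ≤ ‖A‖`.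
Hence `‖V⁻¹‖ ≤ √n (2/η)^(n-1)` and `κ_V(A) ≤ n (2/η)^(n-1)`.
-/

open Polynomial WithLp
open scoped Matrix.Norms.L2Operator

lemma SemiconjBy.aeval {R A : Type*} [CommSemiring R] [Semiring A] [Algebra R A] {v a b : A}
    (h : SemiconjBy v a b) (p : R[X]) : SemiconjBy v (aeval a p) (aeval b p) := by
  induction p using Polynomial.induction_on' with
  | add p q hp hq => simpa only [map_add] using hp.add_right hq
  | monomial k r =>
    simpa only [aeval_monomial] using
      SemiconjBy.mul_right (Algebra.commute_algebraMap_right r v) (h.pow_right k)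

lemma norm_aeval_prod_le {R A ι : Type*} [CommSemiring R] [NormedRing A] [NormOneClass A]
    [Algebra R A] (a : A) (s : Finset ι) (p : ι → R[X]) :
    ‖aeval a (∏ i ∈ s, p i)‖ ≤ ∏ i ∈ s, ‖aeval a (p i)‖ := by
  induction s using Finset.cons_induction with
  | empty => simp
  | cons i s _ ih =>
    rw [Finset.prod_cons, Finset.prod_cons, map_mul]
    exact (norm_mul_le _ _).trans (by gcongr)

section NormedAlgebra

variable {𝕜 A : Type*} [NormedField 𝕜] [NormedRing A] [NormedAlgebra 𝕜 A] [NormOneClass A]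

lemma norm_aeval_lagrange_basis_le {ι : Type*} [DecidableEq ι] (a : A) (s : Finset ι)
    (v : ι → 𝕜) (i : ι) :
    ‖aeval a (Lagrange.basis s v i)‖ ≤
      ∏ j ∈ s.erase i, ‖a - algebraMap 𝕜 A (v j)‖ / ‖v i - v j‖ := by
  refine (norm_aeval_prod_le a _ _).trans (Finset.prod_le_prod (fun _ _ => norm_nonneg _) ?_)
  intro j _
  rw [Lagrange.basisDivisor, map_mul, aeval_C, ← Algebra.smul_def, norm_smul, norm_inv,
    inv_mul_eq_div, map_sub, aeval_X, aeval_C]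

lemma spectrum.norm_sub_algebraMap_le [CompleteSpace A] {a : A} {μ : 𝕜}
    (hμ : μ ∈ spectrum 𝕜 a) : ‖a - algebraMap 𝕜 A μ‖ ≤ 2 * ‖a‖ := by
  have := norm_sub_le a (algebraMap 𝕜 A μ)
  rw [norm_algebraMap'] at this
  linarith [spectrum.norm_le_norm_of_mem hμ]

end NormedAlgebra

namespace Matrix

section Field

variable {K n : Type*} [Field K] [Fintype n] [DecidableEq n]

lemma aeval_diagonal (d : n → K) (p : K[X]) :
    aeval (diagonal d) p = diagonal fun i => p.eval (d i) := by
  rw [← diagonalAlgHom_apply (R := K), aeval_algHom_apply, diagonalAlgHom_apply]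
  congr 1
  funext i
  exact (aeval_algHom_apply (Pi.evalAlgHom K (fun _ => K) i) d p).symm

lemma mul_diagonal_single_one_mul (M N : Matrix n n K) (j : n) :
    M * diagonal (Pi.single j 1) * N = vecMulVec (M.col j) (N.row j) := by
  rw [diagonal_single, single_eq_single_vecMulVec_single, mul_vecMulVec, vecMulVec_mul,
    mulVec_single_one, single_one_vecMul]

lemma aeval_lagrange_basis_eq_vecMulVec {A V : Matrix n n K} {d : n → K} (hV : IsUnit V)
    (hAV : A * V = V * diagonal d) (hd : Function.Injective d) (j : n) :
    aeval A (Lagrange.basis Finset.univ d j) = vecMulVec (V.col j) (V⁻¹.row j) := by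
  have hdiag : (fun i => (Lagrange.basis Finset.univ d j).eval (d i)) = Pi.single j 1 := by
    funext i
    rcases eq_or_ne i j with rfl | hij
    · simpa using Lagrange.eval_basis_self hd.injOn (Finset.mem_univ i)
    · simpa [hij] using Lagrange.eval_basis_of_ne hij.symm (Finset.mem_univ i)
  have hconj := (SemiconjBy.aeval hAV.symm (Lagrange.basis Finset.univ d j)).eq
  rw [aeval_diagonal, hdiag] at hconj
  rw [← mul_diagonal_single_one_mul, hconj, mul_assoc,
    mul_nonsing_inv _ ((isUnit_iff_isUnit_det V).mp hV), mul_one]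

lemma exists_injective_mem_charpoly_roots [IsAlgClosed K] {A : Matrix n n K}
    (h : A.charpoly.roots.Nodup) :
    ∃ d : n → K, Function.Injective d ∧ ∀ i, d i ∈ A.charpoly.roots := by
  classical
  have e : n ≃ A.charpoly.roots.toFinset := Fintype.equivOfCardEq <| by
    rw [Fintype.card_coe, Multiset.toFinset_card_of_nodup h, IsAlgClosed.card_roots_eq_natDegree,
      charpoly_natDegree_eq_dim]
  exact ⟨fun i => e i, Subtype.val_injective.comp e.injective,
    fun i => Multiset.mem_toFinset.mp (e i).2⟩

end Field

variable {𝕜 m n : Type*} [RCLike 𝕜] [Fintype m] [Fintype n] [DecidableEq n]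

lemma l2_opNorm_le_sqrt_sum_norm_sq (M : Matrix m n 𝕜) :
    ‖M‖ ≤ √(∑ i, ∑ j, ‖M i j‖ ^ 2) := by
  refine ContinuousLinearMap.opNorm_le_bound _ (Real.sqrt_nonneg _) fun x => ?_
  have row_le (i : m) : ‖(M *ᵥ ofLp x) i‖ ≤ √(∑ j, ‖M i j‖ ^ 2) * ‖x‖ := by
    rw [EuclideanSpace.norm_eq]
    calc ‖(M *ᵥ ofLp x) i‖ ≤ ∑ j, ‖M i j‖ * ‖ofLp x j‖ := by
          simpa only [mulVec, dotProduct, norm_mul] using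
            norm_sum_le Finset.univ fun j => M i j * ofLp x j
      _ ≤ _ := Real.sum_mul_le_sqrt_mul_sqrt _ _ _
  calc ‖toLp 2 (M *ᵥ ofLp x)‖ = √(∑ i, ‖(M *ᵥ ofLp x) i‖ ^ 2) := EuclideanSpace.norm_eq _
    _ ≤ √(∑ i, (√(∑ j, ‖M i j‖ ^ 2) * ‖x‖) ^ 2) := by gcongr with i; exact row_le i
    _ = √(∑ i, ∑ j, ‖M i j‖ ^ 2) * ‖x‖ := by
        simp_rw [mul_pow, Real.sq_sqrt (Finset.sum_nonneg fun _ _ => sq_nonneg _),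
          ← Finset.sum_mul]
        rw [Real.sqrt_mul (Finset.sum_nonneg fun _ _ => Finset.sum_nonneg fun _ _ => sq_nonneg _),
          Real.sqrt_sq (norm_nonneg _)]

lemma l2_opNorm_le_sqrt_card_mul_of_norm_row_le {M : Matrix m n 𝕜} {c : ℝ} (hc : 0 ≤ c)
    (h : ∀ i, ‖toLp 2 (M.row i)‖ ≤ c) : ‖M‖ ≤ √(Fintype.card m) * c := by
  refine (l2_opNorm_le_sqrt_sum_norm_sq M).trans ?_
  rw [← Real.sqrt_sq hc, ← Real.sqrt_mul (Nat.cast_nonneg _)]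
  gcongr
  calc ∑ i, ∑ j, ‖M i j‖ ^ 2 = ∑ i, ‖toLp 2 (M.row i)‖ ^ 2 := by
        simp [EuclideanSpace.norm_sq_eq]
    _ ≤ ∑ _i : m, c ^ 2 := by gcongr with i; exact h i
    _ = _ := by simp

lemma l2_opNorm_le_sqrt_card_mul_of_norm_col_le [DecidableEq m] {M : Matrix m n 𝕜} {c : ℝ}
    (hc : 0 ≤ c) (h : ∀ j, ‖toLp 2 (M.col j)‖ ≤ c) : ‖M‖ ≤ √(Fintype.card n) * c := by
  rw [← l2_opNorm_conjTranspose]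
  exact l2_opNorm_le_sqrt_card_mul_of_norm_row_le hc fun j => by
    simpa [EuclideanSpace.norm_eq] using h j

lemma l2_opNorm_vecMulVec (x : m → 𝕜) (y : n → 𝕜) :
    ‖vecMulVec x y‖ = ‖toLp 2 x‖ * ‖toLp 2 y‖ := by
  have h := InnerProductSpace.symm_toEuclideanLin_rankOne (toLp 2 x) (toLp 2 (star y))
  rw [star_star] at h
  rw [← h, l2_opNorm_def, LinearEquiv.trans_apply, LinearEquiv.apply_symm_apply]
  change ‖InnerProductSpace.rankOne 𝕜 (toLp 2 x) (toLp 2 (star y))‖ = _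
  simp [EuclideanSpace.norm_eq]

lemma exists_unit_eigenvector {A : Matrix n n 𝕜} {μ : 𝕜} (hμ : μ ∈ spectrum 𝕜 A) :
    ∃ v : n → 𝕜, ‖toLp 2 v‖ = 1 ∧ Module.End.HasEigenvector (toLin' A) μ v := by
  rw [← AlgEquiv.spectrum_eq (toLinAlgEquiv' (R := 𝕜) (n := n)),
    ← Module.End.hasEigenvalue_iff_mem_spectrum] at hμ
  obtain ⟨v, hv_mem, hv_ne⟩ := hμ.exists_hasEigenvector
  have hv : ‖toLp 2 v‖ ≠ 0 := by simpa using hv_ne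
  refine ⟨((‖toLp 2 v‖⁻¹ : ℝ) : 𝕜) • v, ?_, Submodule.smul_mem _ _ hv_mem,
    smul_ne_zero (by simpa using hv) hv_ne⟩
  rw [toLp_smul, norm_smul, RCLike.norm_ofReal, abs_inv, abs_norm, inv_mul_cancel₀ hv]

lemma exists_isUnit_mul_eq_mul_diagonal {A : Matrix n n 𝕜} {d : n → 𝕜}
    (hd : Function.Injective d) (hspec : ∀ i, d i ∈ spectrum 𝕜 A) :
    ∃ V : Matrix n n 𝕜, IsUnit V ∧ A * V = V * diagonal d ∧ ∀ j, ‖toLp 2 (V.col j)‖ = 1 := by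
  choose u hu_norm hu_eig using fun i => exists_unit_eigenvector (hspec i)
  refine ⟨(of u)ᵀ, ?_, ?_, hu_norm⟩
  · exact linearIndependent_cols_iff_isUnit.mp
      (Module.End.eigenvectors_linearIndependent' _ d hd u hu_eig)
  · ext i j
    have := congrFun (hu_eig j).apply_eq_smul i
    rw [mul_diagonal]
    simpa [mul_apply, toLin'_apply, mulVec, dotProduct, mul_comm] using this

lemma norm_col_mul_norm_row_inv_le {A V : Matrix n n 𝕜} {d : n → 𝕜} (hV : IsUnit V)
    (hAV : A * V = V * diagonal d) (hd : Function.Injective d) (j : n) :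
    ‖toLp 2 (V.col j)‖ * ‖toLp 2 (V⁻¹.row j)‖ ≤
      ∏ k ∈ Finset.univ.erase j, ‖A - algebraMap 𝕜 _ (d k)‖ / ‖d j - d k‖ := by
  have : Nonempty n := ⟨j⟩
  rw [← l2_opNorm_vecMulVec, ← aeval_lagrange_basis_eq_vecMulVec hV hAV hd j]
  exact norm_aeval_lagrange_basis_le A _ d j

section Gap

variable {A V : Matrix n n 𝕜} {d : n → 𝕜} {η : ℝ}

lemma norm_row_inv_le_of_gap (hη : 0 < η) (hspec : ∀ i, d i ∈ spectrum 𝕜 A)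
    (hgap : ∀ i k, i ≠ k → η ≤ ‖d i - d k‖) (hV : IsUnit V) (hAV : A * V = V * diagonal d)
    {j : n} (hcol : ‖toLp 2 (V.col j)‖ = 1) :
    ‖toLp 2 (V⁻¹.row j)‖ ≤ (2 * ‖A‖ / η) ^ (Fintype.card n - 1) := by
  have : Nonempty n := ⟨j⟩
  have hd : Function.Injective d := fun i k hik => by
    by_contra hne
    have := hgap i k hne
    rw [hik, sub_self, norm_zero] at this
    exact this.not_gt hη
  calc ‖toLp 2 (V⁻¹.row j)‖ = ‖toLp 2 (V.col j)‖ * ‖toLp 2 (V⁻¹.row j)‖ := by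
        rw [hcol, one_mul]
    _ ≤ ∏ k ∈ Finset.univ.erase j, ‖A - algebraMap 𝕜 _ (d k)‖ / ‖d j - d k‖ :=
      norm_col_mul_norm_row_inv_le hV hAV hd j
    _ ≤ ∏ _k ∈ Finset.univ.erase j, 2 * ‖A‖ / η := by
      gcongr with k hk
      · exact spectrum.norm_sub_algebraMap_le (hspec k)
      · exact hgap j k (Finset.ne_of_mem_erase hk).symm
    _ = _ := by
      rw [Finset.prod_const, Finset.card_erase_of_mem (Finset.mem_univ j), Finset.card_univ]

lemma l2_opNorm_mul_l2_opNorm_inv_le_of_gap (hη : 0 < η) (hspec : ∀ i, d i ∈ spectrum 𝕜 A)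
    (hgap : ∀ i k, i ≠ k → η ≤ ‖d i - d k‖) (hV : IsUnit V) (hAV : A * V = V * diagonal d)
    (hcol : ∀ j, ‖toLp 2 (V.col j)‖ = 1) :
    ‖V‖ * ‖V⁻¹‖ ≤ Fintype.card n * (2 * ‖A‖ / η) ^ (Fintype.card n - 1) := by
  have hV_norm : ‖V‖ ≤ √(Fintype.card n) * 1 :=
    l2_opNorm_le_sqrt_card_mul_of_norm_col_le zero_le_one fun j => (hcol j).le
  have hVinv_norm : ‖V⁻¹‖ ≤ √(Fintype.card n) * (2 * ‖A‖ / η) ^ (Fintype.card n - 1) :=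
    l2_opNorm_le_sqrt_card_mul_of_norm_row_le (by positivity) fun j =>
      norm_row_inv_le_of_gap hη hspec hgap hV hAV (hcol j)
  calc ‖V‖ * ‖V⁻¹‖ ≤ √(Fintype.card n) * 1 * (√(Fintype.card n) * (2 * ‖A‖ / η) ^ _) :=
        mul_le_mul hV_norm hVinv_norm (norm_nonneg _) (by positivity)
    _ = _ := by rw [mul_one, ← mul_assoc, Real.mul_self_sqrt (Nat.cast_nonneg _)]

end Gap

end Matrix

lemma two_div_pow_pred_le {η : ℝ} (hη : 0 < η) {n : ℕ} (hn : 1 ≤ n) :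
    (2 / η) ^ (n - 1) ≤ 2 ^ n * η ^ ((1 : ℝ) - n) := by
  have : η ^ ((1 : ℝ) - n) = (η ^ (n - 1))⁻¹ := by
    rw [← Real.rpow_natCast, ← Real.rpow_neg hη.le, Nat.cast_sub hn, Nat.cast_one, neg_sub]
  rw [this, div_pow, div_eq_mul_inv]
  gcongr
  · norm_num
  · omega

section

variable {n : ℕ}

lemma opNorm_eq_l2_opNorm (A : Matrix (Fin n) (Fin n) ℂ) : opNorm A = ‖A‖ := rfl

open scoped Classical in
lemma minGap_le_norm_sub {A : Matrix (Fin n) (Fin n) ℂ} {a b : ℂ} (ha : a ∈ A.charpoly.roots)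
    (hb : b ∈ A.charpoly.roots.erase a) : minGap A ≤ ‖a - b‖ :=
  csInf_le ⟨0, by rintro _ ⟨_, _, _, _, rfl⟩; exact norm_nonneg _⟩ ⟨a, ha, b, hb, rfl⟩

lemma nodup_charpoly_roots_of_minGap_pos {A : Matrix (Fin n) (Fin n) ℂ} (h : 0 < minGap A) :
    A.charpoly.roots.Nodup := by
  classical
  refine Multiset.nodup_iff_count_le_one.mpr fun a => not_lt.mp fun ha => h.not_ge ?_
  have hmem : a ∈ A.charpoly.roots.erase a := by
    rw [← Multiset.count_pos, Multiset.count_erase_self]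
    omega
  simpa using minGap_le_norm_sub (Multiset.mem_of_mem_erase hmem) hmem

lemma kappaV_le_of_mul_eq_mul_diagonal {A V : Matrix (Fin n) (Fin n) ℂ} {d : Fin n → ℂ}
    (hV : IsUnit V) (hAV : A * V = V * diagonal d) :
    kappaV A ≤ ENNReal.ofReal (‖V‖ * ‖V⁻¹‖) := by
  have hA : A = V * diagonal d * V⁻¹ := by
    rw [← hAV, mul_nonsing_inv_cancel_right _ _ ((isUnit_iff_isUnit_det V).mp hV)]
  exact iInf_le_of_le V <| iInf_le_of_le (diagonal d) <| iInf_le_of_le hV <|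
    iInf_le_of_le (isDiag_diagonal d) <| iInf_le _ hA

end

/-- exponential bound on κ_V in terms of the eigenvalue gap. -/
theorem kappaV_le_of_gap {n : ℕ} (hn : 2 ≤ n) (A : Matrix (Fin n) (Fin n) ℂ)
    (hA : opNorm A ≤ 1) (hgap : 0 < minGap A) :
    kappaV A ≤ ENNReal.ofReal ((n : ℝ) * 2 ^ n * minGap A ^ ((1 : ℝ) - n)) := by
  rw [opNorm_eq_l2_opNorm] at hA
  obtain ⟨d, hd, hroots⟩ :=
    exists_injective_mem_charpoly_roots (nodup_charpoly_roots_of_minGap_pos hgap)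
  have hspec (i : Fin n) : d i ∈ spectrum ℂ A :=
    mem_spectrum_iff_isRoot_charpoly.mpr (isRoot_of_mem_roots (hroots i))
  have hsep (i k : Fin n) (hik : i ≠ k) : minGap A ≤ ‖d i - d k‖ :=
    minGap_le_norm_sub (hroots i) ((Multiset.mem_erase_of_ne (hd.ne hik.symm)).mpr (hroots k))
  obtain ⟨V, hV, hAV, hcol⟩ := exists_isUnit_mul_eq_mul_diagonal hd hspec
  refine (kappaV_le_of_mul_eq_mul_diagonal hV hAV).trans (ENNReal.ofReal_le_ofReal ?_)
  calc ‖V‖ * ‖V⁻¹‖ ≤ n * (2 * ‖A‖ / minGap A) ^ (n - 1) := by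
        simpa using l2_opNorm_mul_l2_opNorm_inv_le_of_gap hgap hspec hsep hV hAV hcol
    _ ≤ n * (2 / minGap A) ^ (n - 1) := by gcongr; linarith
    _ ≤ n * 2 ^ n * minGap A ^ ((1 : ℝ) - n) := by
        rw [mul_assoc]
        gcongr
        exact two_div_pow_pred_le hgap (by omega)

end
end

section
/- Suppose A ∈ ℂ^{n×n} has n distinct eigenvalues λ_1,…,λ_n, ordered so that κ(λ_1) = max_j κ(λ_j). Then for every ε > 0, the ε-pseudospectrum Λ_ε(A) contains the closed disk centered at λ_1 of radius ½·min( η(A)/n , κ(λ_1)·ε ). -/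
open MeasureTheory Matrix
open scoped ENNReal

noncomputable section

/-! Write `A = V diag(λ) V⁻¹`, let `b` be the first row of `V⁻¹` and `vⱼ` the columns of `V`, so
that `κ(λ₁) = ‖v₁‖ ‖b‖`. For `z ≠ λ₁` in the disk the gap condition gives
`|z - λⱼ| ≥ (2n - 1) |z - λ₁|` for `j ≠ 1`. In the expansion
`x = (zI - A)⁻¹ b̄ = Σⱼ (z - λⱼ)⁻¹ (V⁻¹ b̄)ⱼ vⱼ`, the first term has norm `‖b‖ κ(λ₁) / |z - λ₁|`
and by Cauchy–Schwarz the `j`-th is at most `‖b‖ κ(λⱼ) / |z - λⱼ|`, so the first term dominates: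
`‖x‖ ≥ ‖b‖ κ(λ₁) / (2 |z - λ₁|)`. Hence `σₙ(zI - A) ≤ ‖b̄‖ / ‖x‖ ≤ 2 |z - λ₁| / κ(λ₁) ≤ ε`. -/

section L2Norm

variable {n : ℕ}

lemma l2norm_eq_norm_toLp (v : Fin n → ℂ) :
    l2norm v = ‖(WithLp.toLp 2 v : EuclideanSpace ℂ (Fin n))‖ := by
  rw [EuclideanSpace.norm_eq, l2norm]

lemma l2norm_nonneg (v : Fin n → ℂ) : 0 ≤ l2norm v := Real.sqrt_nonneg _

lemma l2norm_pos {v : Fin n → ℂ} (hv : v ≠ 0) : 0 < l2norm v := by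
  rw [l2norm_eq_norm_toLp, norm_pos_iff]
  simpa using hv

lemma l2norm_star (v : Fin n → ℂ) : l2norm (star v) = l2norm v := by
  simp [l2norm]

lemma norm_dotProduct_le (v w : Fin n → ℂ) : ‖v ⬝ᵥ w‖ ≤ l2norm v * l2norm w := by
  have h := norm_inner_le_norm (𝕜 := ℂ) (WithLp.toLp 2 (star v) : EuclideanSpace ℂ (Fin n))
    (WithLp.toLp 2 w)
  rwa [EuclideanSpace.inner_toLp_toLp, star_star, dotProduct_comm, ← l2norm_eq_norm_toLp,
    ← l2norm_eq_norm_toLp, l2norm_star] at h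

lemma dotProduct_star_self (v : Fin n → ℂ) : v ⬝ᵥ star v = ((l2norm v ^ 2 : ℝ) : ℂ) := by
  rw [l2norm_eq_norm_toLp, ← EuclideanSpace.inner_toLp_toLp]
  exact_mod_cast inner_self_eq_norm_sq_to_K (𝕜 := ℂ) _

lemma star_dotProduct_self (v : Fin n → ℂ) : star v ⬝ᵥ v = ((l2norm v ^ 2 : ℝ) : ℂ) := by
  rw [dotProduct_comm, dotProduct_star_self]

lemma norm_mulVec_star_row_le (W : Matrix (Fin n) (Fin n) ℂ) (i j : Fin n) :
    ‖(W *ᵥ star (W.row i)) j‖ ≤ l2norm (W.row j) * l2norm (W.row i) := by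
  have h := norm_dotProduct_le (W.row j) (star (W.row i))
  rwa [l2norm_star] at h

lemma norm_sub_sum_erase_le_norm_sum {E ι : Type*} [SeminormedAddCommGroup E] [DecidableEq ι]
    {s : Finset ι} (f : ι → E) {i : ι} (hi : i ∈ s) :
    ‖f i‖ - ∑ j ∈ s.erase i, ‖f j‖ ≤ ‖∑ j ∈ s, f j‖ := by
  rw [← Finset.add_sum_erase s f hi]
  have h := norm_sub_le (f i + ∑ j ∈ s.erase i, f j) (∑ j ∈ s.erase i, f j)
  rw [add_sub_cancel_right] at h
  linarith [norm_sum_le (s.erase i) f]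

lemma sub_sum_erase_le_l2norm_mulVec (V : Matrix (Fin n) (Fin n) ℂ) (y : Fin n → ℂ)
    (i : Fin n) :
    ‖y i‖ * l2norm (V.col i) - ∑ j ∈ Finset.univ.erase i, ‖y j‖ * l2norm (V.col j) ≤
      l2norm (V *ᵥ y) := by
  set v : Fin n → EuclideanSpace ℂ (Fin n) := fun j => WithLp.toLp 2 (V.col j)
  have hsum : WithLp.toLp 2 (V *ᵥ y) = ∑ j, y j • v j := by
    rw [mulVec_eq_sum, WithLp.toLp_sum]
    simp only [op_smul_eq_smul, WithLp.toLp_smul]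
    rfl
  simpa only [l2norm_eq_norm_toLp, hsum, norm_smul] using
    norm_sub_sum_erase_le_norm_sum (fun j => y j • v j) (Finset.mem_univ i)

end L2Norm

section SmallestSingularValue

variable {n : ℕ}

open scoped ComplexOrder in
lemma Matrix.IsHermitian.posSemidef_sub_smul_one {ι : Type*} [Fintype ι] [DecidableEq ι]
    {H : Matrix ι ι ℂ} (hH : H.IsHermitian) {c : ℝ} (hc : ∀ i, c ≤ hH.eigenvalues i) :
    (H - (c : ℂ) • 1).PosSemidef := by
  have hc_conj : ((c : ℂ) • 1 : Matrix ι ι ℂ) =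
      Unitary.conjStarAlgAut ℂ _ hH.eigenvectorUnitary (diagonal fun _ => (c : ℂ)) := by
    rw [← smul_one_eq_diagonal, map_smul, map_one]
  have h_conj : H - (c : ℂ) • 1 = Unitary.conjStarAlgAut ℂ _ hH.eigenvectorUnitary
      (diagonal fun i => ((hH.eigenvalues i - c : ℝ) : ℂ)) := by
    conv_lhs => rw [hH.spectral_theorem, hc_conj, ← map_sub, diagonal_sub]
    simp
  rw [h_conj]
  simpa [Unitary.isUnit_coe.posSemidef_star_right_conjugate_iff, posSemidef_diagonal_iff] using hc

lemma sLow_zero_eq_sqrt (hn : 0 < n) (M : Matrix (Fin n) (Fin n) ℂ) :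
    sLow M 0 = √((isHermitian_conjTranspose_mul_self M).eigenvalues
      (Tuple.sort (isHermitian_conjTranspose_mul_self M).eigenvalues ⟨0, hn⟩)) := by
  rw [sLow, dif_pos hn, svAsc]

lemma sLow_zero_nonneg (M : Matrix (Fin n) (Fin n) ℂ) : 0 ≤ sLow M 0 := by
  unfold sLow
  split_ifs
  exacts [Real.sqrt_nonneg _, le_rfl]

open scoped ComplexOrder in
lemma sLow_zero_mul_l2norm_le (M : Matrix (Fin n) (Fin n) ℂ) (x : Fin n → ℂ) :
    sLow M 0 * l2norm x ≤ l2norm (M *ᵥ x) := by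
  rcases Nat.eq_zero_or_pos n with rfl | hn
  · simp [sLow, l2norm]
  set hH := isHermitian_conjTranspose_mul_self M
  set μ := hH.eigenvalues (Tuple.sort hH.eigenvalues ⟨0, hn⟩)
  have hμ_le : ∀ i, μ ≤ hH.eigenvalues i := by
    intro i
    obtain ⟨k, rfl⟩ := (Tuple.sort hH.eigenvalues).surjective i
    exact Tuple.monotone_sort hH.eigenvalues (show (⟨0, hn⟩ : Fin n) ≤ k from Nat.zero_le _)
  have hpsd := (hH.posSemidef_sub_smul_one hμ_le).dotProduct_mulVec_nonneg x
  have hquad : star x ⬝ᵥ ((Mᴴ * M - (μ : ℂ) • 1) *ᵥ x) =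
      ((l2norm (M *ᵥ x) ^ 2 - μ * l2norm x ^ 2 : ℝ) : ℂ) := by
    rw [sub_mulVec, dotProduct_sub, ← mulVec_mulVec, dotProduct_mulVec, ← star_mulVec,
      star_dotProduct_self, smul_mulVec, one_mulVec, dotProduct_smul, star_dotProduct_self]
    push_cast
    ring
  rw [hquad, Complex.zero_le_real, sub_nonneg] at hpsd
  calc sLow M 0 * l2norm x = √(μ * l2norm x ^ 2) := by
        rw [sLow_zero_eq_sqrt hn, Real.sqrt_mul' _ (sq_nonneg _), Real.sqrt_sq (l2norm_nonneg x)]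
    _ ≤ √(l2norm (M *ᵥ x) ^ 2) := Real.sqrt_le_sqrt hpsd
    _ = l2norm (M *ᵥ x) := Real.sqrt_sq (l2norm_nonneg _)

lemma sLow_zero_le_of_l2norm_mulVec_le {M : Matrix (Fin n) (Fin n) ℂ} {x : Fin n → ℂ} {c : ℝ}
    (hx : 0 < l2norm x) (h : l2norm (M *ᵥ x) ≤ c * l2norm x) : sLow M 0 ≤ c :=
  le_of_mul_le_mul_right ((sLow_zero_mul_l2norm_le M x).trans h) hx

end SmallestSingularValue

section Diagonalizable

variable {n : ℕ} {V : Matrix (Fin n) (Fin n) ℂ}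

open Polynomial in
lemma roots_charpoly_conj_diagonal (hV : IsUnit V) (lam : Fin n → ℂ) :
    (V * diagonal lam * V⁻¹).charpoly.roots = Finset.univ.val.map lam := by
  obtain ⟨U, rfl⟩ := hV
  rw [charpoly_units_conj, charpoly_diagonal, roots_prod]
  · simp
  · simp [Finset.prod_ne_zero_iff, X_sub_C_ne_zero]

lemma minGap_le_norm_sub_s4 {A : Matrix (Fin n) (Fin n) ℂ} {lam : Fin n → ℂ}
    (hroots : A.charpoly.roots = Finset.univ.val.map lam) {i j : Fin n} (hij : i ≠ j) :
    minGap A ≤ ‖lam i - lam j‖ := by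
  classical
  have hi : i ∈ Finset.univ.val := Finset.mem_val.mpr (Finset.mem_univ i)
  have hj : j ∈ Finset.univ.val := Finset.mem_val.mpr (Finset.mem_univ j)
  refine csInf_le ⟨0, ?_⟩ ⟨lam i, ?_, lam j, ?_, rfl⟩
  · rintro d ⟨a, -, b, -, rfl⟩
    exact norm_nonneg _
  · rw [hroots]
    exact Multiset.mem_map_of_mem _ hi
  · rw [hroots, ← Multiset.map_erase_of_mem _ _ hi]
    exact Multiset.mem_map_of_mem _ ((Multiset.mem_erase_of_ne hij.symm).mpr hj)

lemma row_inv_dotProduct_col (hV : IsUnit V) (j : Fin n) : V⁻¹.row j ⬝ᵥ V.col j = 1 := by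
  have h := congrFun (congrFun (nonsing_inv_mul V ((isUnit_iff_isUnit_det V).mp hV)) j) j
  rwa [mul_apply, one_apply_eq] at h

lemma l2norm_col_pos (hV : IsUnit V) (j : Fin n) : 0 < l2norm (V.col j) :=
  l2norm_pos fun h => by simpa [h] using row_inv_dotProduct_col hV j

lemma l2norm_row_inv_pos (hV : IsUnit V) (j : Fin n) : 0 < l2norm (V⁻¹.row j) :=
  l2norm_pos fun h => by simpa [h] using row_inv_dotProduct_col hV j

lemma evCond_eq (j : Fin n) :
    evCond V j = l2norm (V.col j) * l2norm (V⁻¹.row j) := rfl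

lemma evCond_pos (hV : IsUnit V) (j : Fin n) : 0 < evCond V j :=
  mul_pos (l2norm_col_pos hV j) (l2norm_row_inv_pos hV j)

lemma smul_one_sub_conj_diagonal (hV : IsUnit V) (z : ℂ) (lam : Fin n → ℂ) :
    z • 1 - V * diagonal lam * V⁻¹ = V * diagonal (fun j => z - lam j) * V⁻¹ := by
  have hVV : V * V⁻¹ = 1 := mul_nonsing_inv V ((isUnit_iff_isUnit_det V).mp hV)
  rw [← diagonal_sub, ← smul_one_eq_diagonal]
  simp [mul_sub, sub_mul, hVV]

lemma conj_mulVec_mulVec (hV : IsUnit V) (D : Matrix (Fin n) (Fin n) ℂ) (y : Fin n → ℂ) :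
    (V * D * V⁻¹) *ᵥ (V *ᵥ y) = V *ᵥ (D *ᵥ y) := by
  rw [mulVec_mulVec, mul_assoc, nonsing_inv_mul V ((isUnit_iff_isUnit_det V).mp hV), mul_one,
    ← mulVec_mulVec]

lemma conj_diagonal_mulVec_col (hV : IsUnit V) (lam : Fin n → ℂ) (j : Fin n) :
    (V * diagonal lam * V⁻¹) *ᵥ V.col j = lam j • V.col j := by
  rw [← mulVec_single_one, conj_mulVec_mulVec hV, diagonal_mulVec_single, mulVec_single,
    mul_one, op_smul_eq_smul, mulVec_single_one]

lemma conj_diagonal_mulVec_inv (hV : IsUnit V) {d : Fin n → ℂ} (hd : ∀ j, d j ≠ 0)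
    (u : Fin n → ℂ) :
    (V * diagonal d * V⁻¹) *ᵥ (V *ᵥ fun j => (d j)⁻¹ * (V⁻¹ *ᵥ u) j) = u := by
  have hd_inv : diagonal d *ᵥ (fun j => (d j)⁻¹ * (V⁻¹ *ᵥ u) j) = V⁻¹ *ᵥ u := by
    ext j
    rw [mulVec_diagonal, ← mul_assoc, mul_inv_cancel₀ (hd j), one_mul]
  rw [conj_mulVec_mulVec hV, hd_inv, mulVec_mulVec,
    mul_nonsing_inv V ((isUnit_iff_isUnit_det V).mp hV), one_mulVec]

end Diagonalizable

section Resolvent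

variable {n : ℕ}

lemma sLow_smul_one_sub_conj_diagonal_eq_zero {V : Matrix (Fin n) (Fin n) ℂ} (hV : IsUnit V)
    (lam : Fin n → ℂ) (j : Fin n) :
    sLow (lam j • 1 - V * diagonal lam * V⁻¹) 0 = 0 := by
  refine le_antisymm (sLow_zero_le_of_l2norm_mulVec_le (l2norm_col_pos hV j) ?_)
    (sLow_zero_nonneg _)
  rw [sub_mulVec, conj_diagonal_mulVec_col hV, smul_mulVec, one_mulVec, sub_self, zero_mul]
  simp [l2norm]

lemma norm_resolvent_coeff_mul_le (V : Matrix (Fin n) (Fin n) ℂ) (lam : Fin n → ℂ) (z : ℂ)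
    (i j : Fin n) :
    ‖(z - lam j)⁻¹ * (V⁻¹ *ᵥ star (V⁻¹.row i)) j‖ * l2norm (V.col j) ≤
      l2norm (V⁻¹.row i) * evCond V j / ‖z - lam j‖ := by
  rw [norm_mul, norm_inv, evCond_eq]
  calc ‖z - lam j‖⁻¹ * ‖(V⁻¹ *ᵥ star (V⁻¹.row i)) j‖ * l2norm (V.col j)
      ≤ ‖z - lam j‖⁻¹ * (l2norm (V⁻¹.row j) * l2norm (V⁻¹.row i)) * l2norm (V.col j) := by
        gcongr
        · exact l2norm_nonneg _
        · exact norm_mulVec_star_row_le _ i j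
    _ = l2norm (V⁻¹.row i) * (l2norm (V.col j) * l2norm (V⁻¹.row j)) / ‖z - lam j‖ := by
        ring

lemma l2norm_resolvent_ge {V : Matrix (Fin n) (Fin n) ℂ} {lam : Fin n → ℂ} (hV : IsUnit V)
    {j₀ : Fin n} {z : ℂ} (hz : z ≠ lam j₀)
    (hκ : ∀ j, evCond V j ≤ evCond V j₀)
    (hgap : ∀ j ≠ j₀, (2 * n - 1) * ‖z - lam j₀‖ ≤ ‖z - lam j‖) :
    l2norm (V⁻¹.row j₀) * evCond V j₀ / ‖z - lam j₀‖ / 2 ≤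
      l2norm (V *ᵥ fun j => (z - lam j)⁻¹ * (V⁻¹ *ᵥ star (V⁻¹.row j₀)) j) := by
  set r := ‖z - lam j₀‖ with hr_def
  set b := V⁻¹.row j₀
  set K := l2norm b * evCond V j₀ / r
  set y := fun j => (z - lam j)⁻¹ * (V⁻¹ *ᵥ star b) j
  have hr : 0 < r := norm_pos_iff.mpr (sub_ne_zero.mpr hz)
  have hn : (1 : ℝ) ≤ n := Nat.one_le_cast.mpr j₀.pos
  have hK : 0 ≤ K := div_nonneg (mul_nonneg (l2norm_nonneg _) (evCond_pos hV j₀).le) hr.le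
  have hy₀ : ‖y j₀‖ * l2norm (V.col j₀) = K := by
    have hw₀ : (V⁻¹ *ᵥ star b) j₀ = ((l2norm b ^ 2 : ℝ) : ℂ) := dotProduct_star_self b
    simp only [y, K, hw₀, norm_mul, norm_inv, Complex.norm_real, ← hr_def, evCond_eq, b,
      Real.norm_of_nonneg (sq_nonneg _)]
    field_simp
  have hy : ∀ j ∈ Finset.univ.erase j₀, ‖y j‖ * l2norm (V.col j) ≤ K / (2 * n - 1) := by
    intro j hj
    refine (norm_resolvent_coeff_mul_le V lam z j₀ j).trans ?_
    calc l2norm b * evCond V j / ‖z - lam j‖ ≤ l2norm b * evCond V j₀ / ((2 * n - 1) * r) :=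
          div_le_div₀ (mul_nonneg (l2norm_nonneg _) (evCond_pos hV j₀).le)
            (mul_le_mul_of_nonneg_left (hκ j) (l2norm_nonneg _)) (mul_pos (by linarith) hr)
            (hgap j (Finset.ne_of_mem_erase hj))
      _ = K / (2 * n - 1) := by rw [div_div, mul_comm r]
  have hsum := Finset.sum_le_card_nsmul _ _ _ hy
  rw [Finset.card_erase_of_mem (Finset.mem_univ _), Finset.card_univ, Fintype.card_fin,
    nsmul_eq_mul, Nat.cast_pred j₀.pos] at hsum
  have hfrac : ((n : ℝ) - 1) * (K / (2 * n - 1)) ≤ K / 2 := by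
    rw [← mul_div_assoc, div_le_div_iff₀ (by linarith) two_pos]
    nlinarith
  linarith [sub_sum_erase_le_l2norm_mulVec V y j₀]

lemma sLow_smul_one_sub_conj_diagonal_le {V : Matrix (Fin n) (Fin n) ℂ} {lam : Fin n → ℂ}
    (hV : IsUnit V) {j₀ : Fin n} {z : ℂ} (hz : z ≠ lam j₀)
    (hκ : ∀ j, evCond V j ≤ evCond V j₀)
    (hgap : ∀ j ≠ j₀, (2 * n - 1) * ‖z - lam j₀‖ ≤ ‖z - lam j‖) :
    sLow (z • 1 - V * diagonal lam * V⁻¹) 0 ≤ 2 * ‖z - lam j₀‖ / evCond V j₀ := by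
  set r := ‖z - lam j₀‖
  set b := V⁻¹.row j₀
  have hr : 0 < r := norm_pos_iff.mpr (sub_ne_zero.mpr hz)
  have hκ_pos := evCond_pos hV j₀
  have hd : ∀ j, z - lam j ≠ 0 := by
    intro j
    rcases eq_or_ne j j₀ with rfl | hj
    · exact sub_ne_zero.mpr hz
    · have hn : (1 : ℝ) ≤ n := Nat.one_le_cast.mpr j₀.pos
      exact norm_pos_iff.mp ((mul_pos (by linarith) hr).trans_le (hgap j hj))
  have hx := l2norm_resolvent_ge hV hz hκ hgap
  have hK : 0 < l2norm b * evCond V j₀ / r / 2 := by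
    have := l2norm_row_inv_pos hV j₀
    positivity
  refine sLow_zero_le_of_l2norm_mulVec_le (hK.trans_le hx) ?_
  rw [smul_one_sub_conj_diagonal hV, conj_diagonal_mulVec_inv hV hd, l2norm_star]
  calc l2norm b = 2 * r / evCond V j₀ * (l2norm b * evCond V j₀ / r / 2) := by field_simp
    _ ≤ _ := by gcongr

end Resolvent

theorem closedBall_subset_pspec_general {n : ℕ} (hn : 0 < n)
    (A V : Matrix (Fin n) (Fin n) ℂ) (lam : Fin n → ℂ)
    (hV : IsUnit V)
    (hdiag : A = V * Matrix.diagonal lam * V⁻¹)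
    (hmax : ∀ j, evCond V j ≤ evCond V ⟨0, hn⟩)
    (ε : ℝ) :
    Metric.closedBall (lam ⟨0, hn⟩)
        (1 / 2 * min (minGap A / n) (evCond V ⟨0, hn⟩ * ε)) ⊆ pspec ε A := by
  set j₀ : Fin n := ⟨0, hn⟩
  intro z hz
  rw [Metric.mem_closedBall, dist_eq_norm] at hz
  set r := ‖z - lam j₀‖
  have hκ := evCond_pos hV j₀
  have hr_gap : 2 * n * r ≤ minGap A := by
    have hn' : (0 : ℝ) < n := Nat.cast_pos.mpr hn
    calc 2 * n * r ≤ 2 * n * (1 / 2 * (minGap A / n)) := by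
          gcongr; exact hz.trans (by gcongr; exact min_le_left _ _)
      _ = minGap A := by field_simp
  have hr_eps : 2 * r ≤ evCond V j₀ * ε := by
    have : r ≤ 1 / 2 * (evCond V j₀ * ε) := hz.trans (by gcongr; exact min_le_right _ _)
    linarith
  have hε : 0 ≤ ε :=
    nonneg_of_mul_nonneg_right ((mul_nonneg zero_le_two (norm_nonneg _)).trans hr_eps) hκ
  show sLow (z • 1 - A) 0 ≤ ε
  subst hdiag
  rcases eq_or_ne z (lam j₀) with rfl | hz₀
  · exact (sLow_smul_one_sub_conj_diagonal_eq_zero hV lam j₀).trans_le hε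
  have hgap : ∀ j ≠ j₀, (2 * n - 1) * r ≤ ‖z - lam j‖ := by
    intro j hj
    have h_min := minGap_le_norm_sub_s4 (roots_charpoly_conj_diagonal hV lam) hj.symm
    have h_tri := norm_sub_le_norm_sub_add_norm_sub (lam j₀) z (lam j)
    rw [norm_sub_rev (lam j₀) z] at h_tri
    linarith
  calc sLow (z • 1 - V * diagonal lam * V⁻¹) 0 ≤ 2 * r / evCond V j₀ :=
        sLow_smul_one_sub_conj_diagonal_le hV hz₀ hmax hgap
    _ ≤ ε := by rwa [div_le_iff₀ hκ, mul_comm ε]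

/-- disks inside the pseudospectrum. -/
theorem closedBall_subset_pspec {n : ℕ} (hn : 0 < n)
    (A V : Matrix (Fin n) (Fin n) ℂ) (lam : Fin n → ℂ)
    (hinj : Function.Injective lam) (hV : IsUnit V)
    (hdiag : A = V * Matrix.diagonal lam * V⁻¹)
    (hmax : ∀ j, evCond V j ≤ evCond V ⟨0, hn⟩)
    (ε : ℝ) (hε : 0 < ε) :
    Metric.closedBall (lam ⟨0, hn⟩)
        (1 / 2 * min (minGap A / n) (evCond V ⟨0, hn⟩ * ε)) ⊆ pspec ε A :=
  closedBall_subset_pspec_general hn A V lam hV hdiag hmax ε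
end
end

section
/- Let W ⊆ ℂ^n be a linear subspace of dimension k ≥ 1. Then there exist an n×n permutation matrix P, a k×k diagonal matrix D with |D_{jj}| ≥ 1/√n for every j, and an (n−k)×k matrix X, such that every column of the n×k block matrix [D; X] (D stacked above X) has unit ℓ² norm and W equals the column space of P·[D; X]. -/
/-!
Take a matrix `M` whose columns are a basis of `W`, and choose `k` rows of `M` whose `k × k` minor
`A` has maximal `|det|`. Then `C = M A⁻¹` still spans `W` and has the identity in the chosen rows;
by Cramer's rule every entry `C i j` is the ratio of another `k × k` minor of `M` to `det A`,
so `|C i j| ≤ 1`. Hence every column of `C` has squared norm between `1` and `n`, and after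
normalising the columns the entries in the chosen rows have modulus at least `1 / √n`.
A permutation moves the chosen rows to the top.
-/

open MeasureTheory Matrix
open scoped ENNReal

noncomputable section

theorem Matrix.det_updateRow_eq_vecMul_inv_mul_det {R ι : Type*} [CommRing R] [Fintype ι]
    [DecidableEq ι] (A : Matrix ι ι R) (hA : IsUnit A.det) (r : ι → R) (j : ι) :
    (A.updateRow j r).det = (r ᵥ* A⁻¹) j * A.det := by
  rw [← cramer_transpose_apply, ← det_smul_inv_vecMul_eq_cramer_transpose _ _ hA, mul_comm]
  rfl

theorem Matrix.range_toLin'_mul_of_isUnit {R m ι : Type*} [CommRing R] [Fintype ι]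
    [DecidableEq ι] (M : Matrix m ι R) {N : Matrix ι ι R} (hN : IsUnit N) :
    LinearMap.range (M * N).toLin' = LinearMap.range M.toLin' := by
  rw [toLin'_mul]
  exact LinearMap.range_comp_of_range_eq_top _
    (LinearMap.range_eq_top.mpr (mulVec_surjective_iff_isUnit.mpr hN))

theorem Matrix.injective_of_submatrix_eq_one {R m ι : Type*} [Zero R] [One R] [NeZero (1 : R)]
    [DecidableEq ι] {C : Matrix m ι R} {σ : ι → m} (h : C.submatrix σ id = 1) :
    Function.Injective σ := by
  intro a b hab
  by_contra hne
  have hab_entry : C (σ a) b = (1 : Matrix ι ι R) a b := congrFun (congrFun h a) b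
  have hbb_entry : C (σ b) b = (1 : Matrix ι ι R) b b := congrFun (congrFun h b) b
  rw [hab, hbb_entry, one_apply_eq, one_apply_ne hne] at hab_entry
  exact one_ne_zero hab_entry

theorem Submodule.exists_matrix_linearIndependent_col_range_eq {K m ι : Type*} [Field K]
    [Fintype m] [Fintype ι] [DecidableEq ι] (W : Submodule K (m → K))
    (hW : Module.finrank K W = Fintype.card ι) :
    ∃ M : Matrix m ι K, LinearIndependent K M.col ∧ LinearMap.range M.toLin' = W := by
  let b : Module.Basis ι K W :=
    (Module.finBasisOfFinrankEq K W hW).reindex (Fintype.equivFinOfCardEq rfl).symm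
  refine ⟨Matrix.of fun i j => (b j : m → K) i, ?_, ?_⟩
  · exact b.linearIndependent.map' W.subtype W.ker_subtype
  · have hcols : Set.range (Matrix.of fun i j => (b j : m → K) i).col =
        W.subtype '' Set.range b := by
      rw [← Set.range_comp]; rfl
    rw [range_toLin', hcols, Submodule.span_image, b.span_eq, Submodule.map_top,
      Submodule.range_subtype]

theorem Matrix.exists_isUnit_submatrix_of_linearIndependent_col {K m ι : Type*} [Field K]
    [Fintype m] [Fintype ι] [DecidableEq ι] (M : Matrix m ι K)
    (hM : LinearIndependent K M.col) : ∃ σ : ι → m, IsUnit (M.submatrix σ id) := by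
  have hrank : M.rank = Fintype.card ι := by
    rw [← rank_transpose]; exact LinearIndependent.rank_matrix (M := Mᵀ) hM
  have hspan : Submodule.span K (Set.range M.row) = ⊤ := by
    apply Submodule.eq_top_of_finrank_eq
    rw [← rank_eq_finrank_span_row, hrank, Module.finrank_fintype_fun_eq_card]
  let b := Module.Basis.ofSpan hspan.ge
  let e := b.indexEquiv (Pi.basisFun K ι)
  have hrow : ∀ i, ∃ r, M.row r = b (e.symm i) :=
    fun i => Module.Basis.ofSpan_subset hspan.ge ⟨e.symm i, rfl⟩
  choose σ hσ using hrow
  refine ⟨σ, linearIndependent_rows_iff_isUnit.mp ?_⟩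
  have hrows : (M.submatrix σ id).row = b ∘ e.symm := funext hσ
  rw [hrows]
  exact b.linearIndependent.comp _ e.symm.injective

namespace Matrix

variable {𝕜 m ι : Type*} [NormedField 𝕜] [Fintype ι] [DecidableEq ι]

theorem exists_isUnit_submatrix_forall_norm_det_le [Fintype m] (M : Matrix m ι 𝕜)
    (hM : LinearIndependent 𝕜 M.col) :
    ∃ σ : ι → m, IsUnit (M.submatrix σ id) ∧
      ∀ τ : ι → m, ‖(M.submatrix τ id).det‖ ≤ ‖(M.submatrix σ id).det‖ := by
  obtain ⟨σ₀, hσ₀⟩ := M.exists_isUnit_submatrix_of_linearIndependent_col hM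
  have : Nonempty (ι → m) := ⟨σ₀⟩
  obtain ⟨σ, hσ⟩ := Finite.exists_max fun τ : ι → m => ‖(M.submatrix τ id).det‖
  refine ⟨σ, ?_, hσ⟩
  rw [isUnit_iff_isUnit_det, isUnit_iff_ne_zero, ← norm_pos_iff] at hσ₀ ⊢
  exact hσ₀.trans_le (hσ σ₀)

/-- Replacing row `j` of `A = M.submatrix σ id` by row `i` of `M` multiplies `det A` by
`(M * A⁻¹) i j`, so maximality of `|det A|` bounds this entry by one. -/
theorem norm_mul_inv_submatrix_apply_le_one [DecidableEq m] (M : Matrix m ι 𝕜) {σ : ι → m}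
    (hσ : IsUnit (M.submatrix σ id))
    (hmax : ∀ τ : ι → m, ‖(M.submatrix τ id).det‖ ≤ ‖(M.submatrix σ id).det‖) (i : m) (j : ι) :
    ‖(M * (M.submatrix σ id)⁻¹) i j‖ ≤ 1 := by
  set A := M.submatrix σ id
  have hdet : IsUnit A.det := (isUnit_iff_isUnit_det A).mp hσ
  have hupdate : M.submatrix (Function.update σ j i) id = A.updateRow j (M i) := by
    ext l l'
    by_cases h : l = j
    · subst h; simp
    · simp [h, A]
  have hcramer : ‖(M * A⁻¹) i j‖ * ‖A.det‖ ≤ 1 * ‖A.det‖ := by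
    rw [one_mul, ← norm_mul]
    calc ‖(M * A⁻¹) i j * A.det‖ = ‖(M.submatrix (Function.update σ j i) id).det‖ := by
          rw [hupdate, det_updateRow_eq_vecMul_inv_mul_det A hdet]; rfl
      _ ≤ ‖A.det‖ := hmax _
  exact le_of_mul_le_mul_right hcramer (norm_pos_iff.mpr hdet.ne_zero)

theorem exists_isUnit_submatrix_mul_eq_one_norm_le_one [Fintype m] (M : Matrix m ι 𝕜)
    (hM : LinearIndependent 𝕜 M.col) :
    ∃ (N : Matrix ι ι 𝕜) (σ : ι → m), IsUnit N ∧ (M * N).submatrix σ id = 1 ∧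
      ∀ i j, ‖(M * N) i j‖ ≤ 1 := by
  classical
  obtain ⟨σ, hσ, hmax⟩ := M.exists_isUnit_submatrix_forall_norm_det_le hM
  refine ⟨(M.submatrix σ id)⁻¹, σ, isUnit_nonsing_inv_iff.mpr hσ, ?_,
    norm_mul_inv_submatrix_apply_le_one M hσ hmax⟩
  rw [submatrix_mul _ _ _ id _ Function.bijective_id, submatrix_id_id,
    mul_nonsing_inv _ ((isUnit_iff_isUnit_det _).mp hσ)]

end Matrix

theorem exists_norm_ge_sum_norm_mul_sq_eq_one {𝕜 m : Type*} [RCLike 𝕜] [Fintype m]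
    (v : m → 𝕜) {i₀ : m} (hv₀ : ‖v i₀‖ = 1) (hv : ∀ i, ‖v i‖ ≤ 1) :
    ∃ c : 𝕜, c ≠ 0 ∧ 1 / √(Fintype.card m) ≤ ‖c‖ ∧ ∑ i, ‖v i * c‖ ^ 2 = 1 := by
  set s := ∑ i, ‖v i‖ ^ 2
  have hs_one : 1 ≤ s := by
    simpa [hv₀] using Finset.single_le_sum (fun i _ => sq_nonneg ‖v i‖) (Finset.mem_univ i₀)
  have hs_card : s ≤ Fintype.card m :=
    calc s ≤ ∑ _i : m, (1 : ℝ) := Finset.sum_le_sum fun i _ => pow_le_one₀ (norm_nonneg _) (hv i)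
      _ = Fintype.card m := by simp
  have hsqrt_pos : 0 < √s := Real.sqrt_pos.mpr (by linarith)
  refine ⟨((√s)⁻¹ : ℝ), by simpa using hsqrt_pos.ne', ?_, ?_⟩
  · rw [RCLike.norm_ofReal, abs_of_pos (inv_pos.mpr hsqrt_pos), one_div]
    exact inv_anti₀ hsqrt_pos (Real.sqrt_le_sqrt hs_card)
  · simp_rw [norm_mul, RCLike.norm_ofReal, mul_pow, ← Finset.sum_mul, sq_abs, inv_pow,
      Real.sq_sqrt (by linarith : (0 : ℝ) ≤ s)]
    exact mul_inv_cancel₀ (by linarith)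

theorem Equiv.Perm.exists_apply_eq_of_injective {α β : Type*} [Finite α] {f g : β → α}
    (hf : Function.Injective f) (hg : Function.Injective g) :
    ∃ τ : Equiv.Perm α, ∀ b, τ (f b) = g b := by
  classical
  have := Fintype.ofFinite α
  let e := (Equiv.ofInjective f hf).symm.trans (Equiv.ofInjective g hg)
  refine ⟨e.extendSubtype, fun b => ?_⟩
  rw [e.extendSubtype_apply_of_mem _ ⟨b, rfl⟩]
  simp [e]

theorem rref_basis_general {n k : ℕ} (W : Submodule ℂ (Fin n → ℂ))
    (hW : Module.finrank ℂ W = k) :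
    ∃ (e : Equiv.Perm (Fin n)) (B : Matrix (Fin n) (Fin k) ℂ) (hkn : k ≤ n),
      (∀ i j : Fin k, i ≠ j → B (Fin.castLE hkn i) j = 0) ∧
      (∀ j : Fin k, 1 / Real.sqrt n ≤ ‖B (Fin.castLE hkn j) j‖) ∧
      (∀ j : Fin k, ∑ i, ‖B i j‖ ^ 2 = 1) ∧
      W = LinearMap.range (Matrix.toLin' (e.permMatrix ℂ * B)) := by
  have hkn : k ≤ n := by simpa [hW] using W.finrank_le
  obtain ⟨M, hM, rfl⟩ :=
    W.exists_matrix_linearIndependent_col_range_eq (ι := Fin k) (by simpa using hW)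
  obtain ⟨N, σ, hN, hCσ, hC⟩ := M.exists_isUnit_submatrix_mul_eq_one_norm_le_one hM
  have hC_rows (l j : Fin k) : (M * N) (σ l) j = (1 : Matrix (Fin k) (Fin k) ℂ) l j :=
    congrFun (congrFun hCσ l) j
  choose d hd_ne hd_norm hd_sum using fun j =>
    exists_norm_ge_sum_norm_mul_sq_eq_one (fun i => (M * N) i j) (i₀ := σ j)
      (by simp [hC_rows]) (fun i => hC i j)
  obtain ⟨τ, hτ⟩ := Equiv.Perm.exists_apply_eq_of_injective (Fin.castLE_injective hkn)
    (injective_of_submatrix_eq_one hCσ)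
  have hB (l j : Fin k) : (M * N * diagonal d).submatrix τ id (Fin.castLE hkn l) j =
      (1 : Matrix (Fin k) (Fin k) ℂ) l j * d j := by
    simp [hτ, mul_diagonal, hC_rows]
  refine ⟨τ.symm, (M * N * diagonal d).submatrix τ id, hkn, fun i j hij => ?_, fun j => ?_,
    fun j => ?_, ?_⟩
  · rw [hB, one_apply_ne hij, zero_mul]
  · rw [hB, one_apply_eq, one_mul]
    simpa using hd_norm j
  · simpa [mul_diagonal, ← hd_sum j] using Equiv.sum_comp τ (fun i => ‖(M * N) i j * d j‖ ^ 2)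
  · rw [Equiv.Perm.permMatrix, PEquiv.toMatrix_toPEquiv_mul, submatrix_submatrix]
    simp only [Function.comp_id, Equiv.self_comp_symm, submatrix_id_id]
    have hd_unit : IsUnit (diagonal d) :=
      isUnit_diagonal.mpr (Pi.isUnit_iff.mpr fun j => (hd_ne j).isUnit)
    rw [range_toLin'_mul_of_isUnit _ hd_unit, range_toLin'_mul_of_isUnit _ hN]

/-- reduced row echelon form basis. -/
theorem rref_basis {n k : ℕ} (hk : 1 ≤ k) (W : Submodule ℂ (Fin n → ℂ))
    (hW : Module.finrank ℂ W = k) :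
    ∃ (e : Equiv.Perm (Fin n)) (B : Matrix (Fin n) (Fin k) ℂ) (hkn : k ≤ n),
      (∀ i j : Fin k, i ≠ j → B (Fin.castLE hkn i) j = 0) ∧
      (∀ j : Fin k, 1 / Real.sqrt n ≤ ‖B (Fin.castLE hkn j) j‖) ∧
      (∀ j : Fin k, ∑ i, ‖B i j‖ ^ 2 = 1) ∧
      W = LinearMap.range (Matrix.toLin' (e.permMatrix ℂ * B)) :=
  rref_basis_general W hW

end
end

section
/- Fix n ≥ 1, ρ ∈ (0,1], v ∈ ℂ^n, r > 0 and s ∈ (0,1). If p(v,r) ≥ s, then the number of indices j with |v_j| ≥ r·√(2/s) is at most log(2/s)/ρ. -/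
open MeasureTheory Matrix
open scoped ENNReal

noncomputable section

/-!
Let `T` be the set of indices with `|v_j| ≥ r √(2/s)` and integrate out the coordinates in `T`
one at a time. With probability `ρ` the entry `j` is a standard Gaussian, whose density is at most
`1/π`, so the pairing lands in a disk of radius `r` with probability at most `r² / |v_j|² ≤ s/2`;
with probability `1 - ρ` the entry vanishes and `v_j` may be replaced by `0`. Induction over `T`
gives `s ≤ p(v, r) ≤ (1 - ρ)^|T| + s/2`, hence `s/2 ≤ (1 - ρ)^|T| ≤ exp (-ρ |T|)`.
-/

open ComplexConjugate Function

lemma integral_gaussianC_density :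
    ∫ z : ℂ, Real.pi⁻¹ * Real.exp (-(‖z‖ ^ 2)) = 1 := by
  have h := GaussianFourier.integral_rexp_neg_mul_sq_norm (V := ℂ) one_pos
  simp only [neg_mul, one_mul, Complex.finrank_real_complex] at h
  rw [integral_const_mul, h]
  norm_num [Real.pi_ne_zero]

instance gaussianC.isProbabilityMeasure : IsProbabilityMeasure gaussianC := by
  constructor
  rw [gaussianC, withDensity_apply _ MeasurableSet.univ, Measure.restrict_univ,
    ← ofReal_integral_eq_lintegral_ofReal, integral_gaussianC_density, ENNReal.ofReal_one]
  · exact .of_integral_ne_zero (by simp [integral_gaussianC_density])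
  · exact ae_of_all _ fun z => by positivity

lemma gaussianC_closedBall_le (w : ℂ) (t : ℝ) :
    gaussianC (Metric.closedBall w t) ≤ ENNReal.ofReal t ^ 2 := by
  rw [gaussianC, withDensity_apply _ measurableSet_closedBall]
  calc ∫⁻ z in Metric.closedBall w t, ENNReal.ofReal (Real.pi⁻¹ * Real.exp (-(‖z‖ ^ 2)))
      ≤ ∫⁻ _ in Metric.closedBall w t, ENNReal.ofReal Real.pi⁻¹ :=
        lintegral_mono fun z => ENNReal.ofReal_le_ofReal <|
          mul_le_of_le_one_right (by positivity) (Real.exp_le_one_iff.mpr (by simp))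
    _ = ENNReal.ofReal t ^ 2 := by
        rw [setLIntegral_const, Complex.volume_closedBall, mul_comm, mul_assoc,
          ← NNReal.coe_real_pi, ← NNReal.coe_inv, ENNReal.ofReal_coe_nnreal, ← ENNReal.coe_mul,
          mul_inv_cancel₀ NNReal.pi_ne_zero, ENNReal.coe_one, mul_one]

lemma setOf_norm_mul_sub_le_eq_closedBall {c : ℂ} (hc : c ≠ 0) (w : ℂ) (t : ℝ) :
    {y : ℂ | ‖y * c - w‖ ≤ t} = Metric.closedBall (w / c) (t / ‖c‖) := by
  ext y
  have hnorm : ‖y * c - w‖ = ‖y - w / c‖ * ‖c‖ := by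
    rw [← norm_mul, sub_mul, div_mul_cancel₀ w hc]
  rw [Set.mem_ofPred_eq, Metric.mem_closedBall, Complex.dist_eq, hnorm,
    le_div_iff₀ (norm_pos_iff.mpr hc)]

lemma gaussianC_setOf_norm_mul_sub_le {c : ℂ} (hc : c ≠ 0) (w : ℂ) (t : ℝ) :
    gaussianC {y : ℂ | ‖y * c - w‖ ≤ t} ≤ ENNReal.ofReal (t / ‖c‖) ^ 2 := by
  rw [setOf_norm_mul_sub_le_eq_closedBall hc]
  exact gaussianC_closedBall_le _ _

lemma sparseG_apply (ρ : ℝ) {S : Set ℂ} (hS : MeasurableSet S) :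
    sparseG ρ S = ENNReal.ofReal ρ * gaussianC S + ENNReal.ofReal (1 - ρ) * S.indicator 1 0 := by
  rw [sparseG, Measure.add_apply, Measure.smul_apply, Measure.smul_apply, smul_eq_mul,
    smul_eq_mul, Measure.dirac_apply' _ hS]

lemma ofReal_add_ofReal_one_sub {ρ : ℝ} (hρ0 : 0 ≤ ρ) (hρ1 : ρ ≤ 1) :
    ENNReal.ofReal ρ + ENNReal.ofReal (1 - ρ) = 1 := by
  rw [← ENNReal.ofReal_add hρ0 (sub_nonneg.mpr hρ1), add_sub_cancel, ENNReal.ofReal_one]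

lemma sparseG.isProbabilityMeasure {ρ : ℝ} (hρ0 : 0 ≤ ρ) (hρ1 : ρ ≤ 1) :
    IsProbabilityMeasure (sparseG ρ) := by
  constructor
  rw [sparseG_apply ρ MeasurableSet.univ, measure_univ, Set.indicator_univ, Pi.one_apply,
    mul_one, mul_one, ofReal_add_ofReal_one_sub hρ0 hρ1]

section LMarginal

variable {δ : Type*} {X : δ → Type*} [∀ i, MeasurableSpace (X i)] [DecidableEq δ]
  {μ : ∀ i, Measure (X i)} [∀ i, IsProbabilityMeasure (μ i)]

lemma lmarginal_const (s : Finset δ) (c : ℝ≥0∞) :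
    ∫⋯∫⁻_s, (fun _ => c) ∂μ = fun _ => c := by
  ext x
  simp only [lmarginal, lintegral_const, measure_univ, mul_one]

lemma lmarginal_const_add_const_mul (s : Finset δ) (a b : ℝ≥0∞) {f : (∀ i, X i) → ℝ≥0∞}
    (hf : Measurable f) :
    ∫⋯∫⁻_s, (fun x => a + b * f x) ∂μ = fun x => a + b * (∫⋯∫⁻_s, f ∂μ) x := by
  ext x
  simp only [lmarginal]
  rw [lintegral_add_left measurable_const,
    lintegral_const_mul b (f := fun y => f (updateFinset x s y)) (hf.comp measurable_updateFinset),
    lintegral_const, measure_univ, mul_one]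

end LMarginal

section Pairing

variable {ι : Type*} [Fintype ι]

def pairingBall (v : ι → ℂ) (z : ℂ) (r : ℝ) : Set (ι → ℂ) :=
  {x | ‖(∑ j, x j * conj (v j)) - z‖ ≤ r}

lemma measurableSet_pairingBall (v : ι → ℂ) (z : ℂ) (r : ℝ) :
    MeasurableSet (pairingBall v z r) :=
  measurableSet_le (by fun_prop) measurable_const

variable [DecidableEq ι]

lemma sum_update_mul_conj (x v : ι → ℂ) (j : ι) (y : ℂ) :
    ∑ i, update x j y i * conj (v i) = y * conj (v j) + ∑ i, x i * conj (update v j 0 i) := by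
  rw [← Finset.add_sum_erase _ _ (Finset.mem_univ j),
    ← Finset.add_sum_erase _ _ (Finset.mem_univ j)]
  simp only [update_self, map_zero, mul_zero, zero_add]
  congr 1
  refine Finset.sum_congr rfl fun i hi => ?_
  rw [update_of_ne (Finset.ne_of_mem_erase hi), update_of_ne (Finset.ne_of_mem_erase hi)]

lemma preimage_update_pairingBall (x v : ι → ℂ) (j : ι) (z : ℂ) (r : ℝ) :
    update x j ⁻¹' pairingBall v z r =
      {y | ‖y * conj (v j) - (z - ∑ i, x i * conj (update v j 0 i))‖ ≤ r} := by
  ext y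
  simp only [Set.mem_preimage, pairingBall, Set.mem_ofPred_eq, sum_update_mul_conj]
  ring_nf

lemma lintegral_indicator_pairingBall_update_le {ρ r ε : ℝ} (hr : 0 < r) {v : ι → ℂ} {j : ι}
    (hvj : r ^ 2 ≤ ε * ‖v j‖ ^ 2) (z : ℂ) (x : ι → ℂ) :
    ∫⁻ y, (pairingBall v z r).indicator 1 (update x j y) ∂sparseG ρ ≤
      ENNReal.ofReal ρ * ENNReal.ofReal ε +
        ENNReal.ofReal (1 - ρ) * (pairingBall (update v j 0) z r).indicator 1 x := by
  have hvj0 : v j ≠ 0 := by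
    rintro h
    rw [h, norm_zero] at hvj
    nlinarith
  set S := update x j ⁻¹' pairingBall v z r
  have hS : MeasurableSet S := measurableSet_pairingBall v z r |>.preimage (measurable_update x)
  have hS0 : S.indicator (1 : ℂ → ℝ≥0∞) 0 = (pairingBall (update v j 0) z r).indicator 1 x := by
    simp only [S, preimage_update_pairingBall, Set.indicator_apply, pairingBall, Set.mem_ofPred_eq,
      zero_mul, zero_sub, norm_neg, norm_sub_rev, Pi.one_apply]
  have hgauss : gaussianC S ≤ ENNReal.ofReal ε := by
    refine (preimage_update_pairingBall x v j z r ▸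
      gaussianC_setOf_norm_mul_sub_le (by simpa) _ r).trans ?_
    rw [Complex.norm_conj, ← ENNReal.ofReal_pow (by positivity), div_pow]
    exact ENNReal.ofReal_le_ofReal <| (div_le_iff₀ (by positivity)).mpr hvj
  calc ∫⁻ y, (pairingBall v z r).indicator 1 (update x j y) ∂sparseG ρ
      = sparseG ρ S := by
        simp_rw [← Set.indicator_comp_right (update x j) (g := 1)]
        exact lintegral_indicator_one hS
    _ = ENNReal.ofReal ρ * gaussianC S + ENNReal.ofReal (1 - ρ) * S.indicator 1 0 :=
        sparseG_apply ρ hS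
    _ ≤ _ := by rw [hS0]; gcongr

lemma lmarginal_indicator_pairingBall_le {ρ r ε : ℝ} (hρ0 : 0 ≤ ρ) (hρ1 : ρ ≤ 1) (hr : 0 < r)
    (T : Finset ι) {v : ι → ℂ} (hv : ∀ j ∈ T, r ^ 2 ≤ ε * ‖v j‖ ^ 2) (z : ℂ) :
    ∫⋯∫⁻_T, (pairingBall v z r).indicator 1 ∂(fun _ => sparseG ρ) ≤
      fun _ => ENNReal.ofReal ((1 - ρ) ^ T.card) + ENNReal.ofReal ε := by
  have := sparseG.isProbabilityMeasure hρ0 hρ1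
  induction T using Finset.induction_on generalizing v with
  | empty =>
    intro x
    rw [lmarginal_empty, Finset.card_empty, pow_zero, ENNReal.ofReal_one]
    exact le_add_right (Set.indicator_apply_le' (fun _ => le_rfl) (fun _ => zero_le_one))
  | @insert j T hj ih =>
    have hind : ∀ v : ι → ℂ, Measurable ((pairingBall v z r).indicator (1 : (ι → ℂ) → ℝ≥0∞)) :=
      fun v => measurable_one.indicator (measurableSet_pairingBall v z r)
    have hv' : ∀ i ∈ T, r ^ 2 ≤ ε * ‖update v j 0 i‖ ^ 2 := fun i hi => by
      rw [update_of_ne (ne_of_mem_of_not_mem hi hj)]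
      exact hv i (Finset.mem_insert_of_mem hi)
    intro x
    rw [lmarginal_insert' _ (hind v) hj]
    calc _ ≤ (∫⋯∫⁻_T, (fun x => ENNReal.ofReal ρ * ENNReal.ofReal ε + ENNReal.ofReal (1 - ρ) *
            (pairingBall (update v j 0) z r).indicator 1 x) ∂fun _ => sparseG ρ) x :=
          lmarginal_mono (fun x => lintegral_indicator_pairingBall_update_le hr
            (hv j (Finset.mem_insert_self j T)) z x) x
      _ ≤ ENNReal.ofReal ρ * ENNReal.ofReal ε + ENNReal.ofReal (1 - ρ) *
            (ENNReal.ofReal ((1 - ρ) ^ T.card) + ENNReal.ofReal ε) := by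
          rw [lmarginal_const_add_const_mul _ _ _ (hind _)]
          dsimp only
          gcongr
          exact ih hv' x
      _ = ENNReal.ofReal ((1 - ρ) ^ (insert j T).card) + ENNReal.ofReal ε := by
          rw [Finset.card_insert_of_notMem hj, pow_succ, ENNReal.ofReal_mul' (sub_nonneg.mpr hρ1),
            mul_add, add_comm, add_assoc, ← add_mul, add_comm (ENNReal.ofReal (1 - ρ)),
            ofReal_add_ofReal_one_sub hρ0 hρ1, one_mul, mul_comm]

lemma pi_sparseG_pairingBall_le {ρ r ε : ℝ} (hρ0 : 0 ≤ ρ) (hρ1 : ρ ≤ 1) (hr : 0 < r)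
    (T : Finset ι) {v : ι → ℂ} (hv : ∀ j ∈ T, r ^ 2 ≤ ε * ‖v j‖ ^ 2) (z : ℂ) :
    Measure.pi (fun _ : ι => sparseG ρ) (pairingBall v z r) ≤
      ENNReal.ofReal ((1 - ρ) ^ T.card) + ENNReal.ofReal ε := by
  have := sparseG.isProbabilityMeasure hρ0 hρ1
  rw [← lintegral_indicator_one (measurableSet_pairingBall v z r)]
  calc _ ≤ ∫⁻ _, ENNReal.ofReal ((1 - ρ) ^ T.card) + ENNReal.ofReal ε
          ∂Measure.pi (fun _ : ι => sparseG ρ) :=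
        lintegral_le_of_lmarginal_le T
          (measurable_one.indicator (measurableSet_pairingBall v z r)) measurable_const
          ((lmarginal_indicator_pairingBall_le hρ0 hρ1 hr T hv z).trans_eq
            (lmarginal_const _ _).symm)
    _ = _ := by rw [lintegral_const, measure_univ, mul_one]

end Pairing

lemma le_log_inv_div_of_le_one_sub_pow {ρ q : ℝ} {k : ℕ} (hρ0 : 0 < ρ) (hρ1 : ρ ≤ 1)
    (hq : 0 < q) (h : q ≤ (1 - ρ) ^ k) : (k : ℝ) ≤ Real.log q⁻¹ / ρ := by
  have hexp : q ≤ Real.exp (-(k * ρ)) :=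
    calc q ≤ (1 - ρ) ^ k := h
      _ ≤ Real.exp (-ρ) ^ k :=
          pow_le_pow_left₀ (sub_nonneg.mpr hρ1) (Real.one_sub_le_exp_neg ρ) k
      _ = Real.exp (-(k * ρ)) := by rw [← Real.exp_nat_mul, mul_neg]
  have hlog := Real.log_le_log hq hexp
  rw [Real.log_exp] at hlog
  rw [le_div_iff₀ hρ0, Real.log_inv]
  linarith

/-- compressible vectors are close to sparse. -/
theorem comp_close_to_sparse {n : ℕ} (ρ : ℝ) (hρ : ρ ∈ Set.Ioc (0 : ℝ) 1)
    (v : Fin n → ℂ) (r s : ℝ) (hr : 0 < r) (hs : s ∈ Set.Ioo (0 : ℝ) 1)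
    (h : ENNReal.ofReal s ≤ pconc n ρ v r) :
    (({j | r * Real.sqrt (2 / s) ≤ ‖v j‖} : Set (Fin n)).ncard : ℝ)
      ≤ Real.log (2 / s) / ρ := by
  classical
  obtain ⟨hρ0, hρ1⟩ := hρ
  obtain ⟨hs0, -⟩ := hs
  set T := Finset.univ.filter fun j => r * Real.sqrt (2 / s) ≤ ‖v j‖
  have hT : ∀ j ∈ T, r ^ 2 ≤ s / 2 * ‖v j‖ ^ 2 := fun j hj =>
    calc r ^ 2 = s / 2 * (r * Real.sqrt (2 / s)) ^ 2 := by
          rw [mul_pow, Real.sq_sqrt (by positivity)]; field_simp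
      _ ≤ s / 2 * ‖v j‖ ^ 2 := by gcongr; exact (Finset.mem_filter.mp hj).2
  have hconc : ENNReal.ofReal s ≤ ENNReal.ofReal ((1 - ρ) ^ T.card) + ENNReal.ofReal (s / 2) :=
    h.trans (iSup_le fun z => pi_sparseG_pairingBall_le hρ0.le hρ1 hr T hT z)
  have hpow : 0 ≤ (1 - ρ) ^ T.card := pow_nonneg (sub_nonneg.mpr hρ1) _
  rw [← ENNReal.ofReal_add hpow (by positivity),
    ENNReal.ofReal_le_ofReal_iff (by positivity)] at hconc
  have hcard := le_log_inv_div_of_le_one_sub_pow hρ0 hρ1 (half_pos hs0)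
    (k := T.card) (by linarith)
  rwa [inv_div, ← Set.ncard_coe_finset, Finset.coe_filter_univ] at hcard

end
end
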